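/- Let N ≥ 1 and let R be the Gausson. Let ψ : ℝ^N → ℂ be a Σ-class function with ∫|ψ|² dx = ∫R² dx, and suppose that inf_{y ∈ ℝ^N, θ ∈ [0,2π)} ‖ψ − e^{−iθ} R(·+y)‖_{L²} ≤ ‖R‖_{L²}. Then the infimum is attained: there exist y₀ ∈ ℝ^N and θ₀ ∈ [0,2π) with ‖ψ − e^{−iθ₀} R(·+y₀)‖_{L²} = inf_{y ∈ ℝ^N, θ ∈ [0,2π)} ‖ψ − e^{−iθ} R(·+y)‖_{L²}. -/

import Mathlib

open MeasureTheory Real Filter Topology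
open scoped InnerProductSpace BigOperators

noncomputable section

/-- Euclidean space ℝ^N. -/
abbrev Sp (N : ℕ) := EuclideanSpace ℝ (Fin N)

variable {N : ℕ}

/-- The j-th partial derivative of a complex-valued function on ℝ^N. -/
def pd (u : Sp N → ℂ) (j : Fin N) (x : Sp N) : ℂ :=
  fderiv ℝ u x (EuclideanSpace.single j 1)

/-- |∇u(x)|², the squared euclidean length of the gradient. -/
def gradSq (u : Sp N → ℂ) (x : Sp N) : ℝ :=
  ∑ j, ‖pd u j x‖ ^ 2

/-- The j-th partial derivative of a real-valued function on ℝ^N. -/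
def pdR (u : Sp N → ℝ) (j : Fin N) (x : Sp N) : ℝ :=
  fderiv ℝ u x (EuclideanSpace.single j 1)

/-- |∇u(x)|² for a real-valued function. -/
def gradSqR (u : Sp N → ℝ) (x : Sp N) : ℝ :=
  ∑ j, pdR u j x ^ 2

/-- The Laplacian of a real-valued function. -/
def lapR (u : Sp N → ℝ) (x : Sp N) : ℝ :=
  ∑ j, fderiv ℝ (fun y => pdR u j y) x (EuclideanSpace.single j 1)

/-- The Laplacian of a complex-valued function. -/
def lap (u : Sp N → ℂ) (x : Sp N) : ℂ :=
  ∑ j, fderiv ℝ (fun y => pd u j y) x (EuclideanSpace.single j 1)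

/-- Σ-class: C¹ with u, ∇u and |x|u square integrable. -/
def IsSigma (u : Sp N → ℂ) : Prop :=
  ContDiff ℝ 1 u ∧ Integrable (fun x => ‖u x‖ ^ 2) ∧
    Integrable (fun x => gradSq u x) ∧
    Integrable (fun x => ‖x‖ ^ 2 * ‖u x‖ ^ 2)

/-- Σ-class for real-valued functions. -/
def IsSigmaR (u : Sp N → ℝ) : Prop :=
  ContDiff ℝ 1 u ∧ Integrable (fun x => u x ^ 2) ∧
    Integrable (fun x => gradSqR u x) ∧
    Integrable (fun x => ‖x‖ ^ 2 * u x ^ 2)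

/-- The squared Σ-norm. -/
def sigmaNormSq (u : Sp N → ℂ) : ℝ :=
  ∫ x, (gradSq u x + ‖x‖ ^ 2 * ‖u x‖ ^ 2 + ‖u x‖ ^ 2)

/-- The integrand |u|² log |u|² (with the convention 0 log 0 = 0, as Real.log 0 = 0). -/
def logTerm (u : Sp N → ℂ) (x : Sp N) : ℝ :=
  ‖u x‖ ^ 2 * Real.log (‖u x‖ ^ 2)

/-- W-class: C¹ with u, ∇u square integrable and |u|² log|u|² integrable. -/
def IsW (u : Sp N → ℂ) : Prop :=
  ContDiff ℝ 1 u ∧ Integrable (fun x => ‖u x‖ ^ 2) ∧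
    Integrable (fun x => gradSq u x) ∧ Integrable (logTerm u)

/-- The Gausson R(x) = e^{(1+N)/2} e^{-|x|²}. -/
def gausson (N : ℕ) (x : Sp N) : ℝ :=
  Real.exp ((1 + N) / 2) * Real.exp (-‖x‖ ^ 2)

/-- The mass of the Gausson, m = ∫ R². -/
def massR (N : ℕ) : ℝ := ∫ x, gausson N x ^ 2

/-- The energy 𝓔(u) = ½∫|∇u|² - ∫|u|² log|u|². -/
def energy (u : Sp N → ℂ) : ℝ :=
  (1 / 2) * (∫ x, gradSq u x) - ∫ x, logTerm u x

/-- The energy of the Gausson, 𝓔(R). -/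
def energyR (N : ℕ) : ℝ :=
  (1 / 2) * (∫ x, gradSqR (gausson N) x)
    - ∫ x, gausson N x ^ 2 * Real.log (gausson N x ^ 2)

/-- The squared H¹ norm. -/
def h1NormSq (u : Sp N → ℂ) : ℝ :=
  (∫ x, gradSq u x) + ∫ x, ‖u x‖ ^ 2

/-- The squared H¹ distance ‖φ - e^{iθ}R(·-y)‖²_{H¹}. -/
def h1DistToGausson (N : ℕ) (φ : Sp N → ℂ) (y : Sp N) (θ : ℝ) : ℝ :=
  (∫ x, ∑ j, ‖pd φ j x - Complex.exp (Complex.I * (θ : ℂ)) * (pdR (gausson N) j (x - y) : ℝ)‖ ^ 2)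
    + ∫ x, ‖φ x - Complex.exp (Complex.I * (θ : ℂ)) * (gausson N (x - y) : ℝ)‖ ^ 2

/-- The Gausson-type initial datum u_{ε,0}(x) = e^{i x·v₀/ε} R((x-x₀)/ε). -/
def gaussonInit (N : ℕ) (x₀ v₀ : Sp N) (ε : ℝ) (x : Sp N) : ℂ :=
  Complex.exp (Complex.I * ((⟪x, v₀⟫_ℝ / ε : ℝ) : ℂ)) * (gausson N (ε⁻¹ • (x - x₀)) : ℝ)

/-- The scaled energy E_ε(u); note 1/(2ε^{N-2}) = ε²/(2ε^N). -/
def Eeps (N : ℕ) (V : Sp N → ℝ) (ε : ℝ) (u : Sp N → ℂ) : ℝ :=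
  (ε ^ 2 / (2 * ε ^ N)) * (∫ x, gradSq u x)
    + (ε ^ N)⁻¹ * (∫ x, V x * ‖u x‖ ^ 2)
    - (ε ^ N)⁻¹ * ∫ x, logTerm u x

/-- V is Cᵏ and bounded together with its derivatives up to order k. -/
def BddDerivs (N : ℕ) (V : Sp N → ℝ) (k : ℕ) : Prop :=
  ContDiff ℝ (k : ℕ∞) V ∧ ∀ i : ℕ, i ≤ k → ∃ B : ℝ, ∀ x, ‖iteratedFDeriv ℝ i V x‖ ≤ B

/-- The action S(u) = ¼∫|∇u|² + ∫|u|² - ½∫|u|² log|u|². -/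
def actionS (u : Sp N → ℂ) : ℝ :=
  (1 / 4) * (∫ x, gradSq u x) + (∫ x, ‖u x‖ ^ 2) - (1 / 2) * ∫ x, logTerm u x

/-- The quadratic form Q(z) = ½∫|∇z|² + 2∫|x|²|z|² - N∫|z|² - 2∫(Re z)². -/
def quadQ (N : ℕ) (z : Sp N → ℂ) : ℝ :=
  (1 / 2) * (∫ x, gradSq z x) + 2 * (∫ x, ‖x‖ ^ 2 * ‖z x‖ ^ 2)
    - N * (∫ x, ‖z x‖ ^ 2) - 2 * ∫ x, (z x).re ^ 2

/-- The squared scaled H¹_ε norm: ε^{2-N}∫|∇φ|² + ε^{-N}∫|φ|². -/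
def h1EpsNormSq (N : ℕ) (ε : ℝ) (u : Sp N → ℂ) : ℝ :=
  ε ^ (2 - (N : ℝ)) * (∫ x, gradSq u x) + (ε ^ N)⁻¹ * ∫ x, ‖u x‖ ^ 2

/-- Second-order Taylor expansion of the action S at the Gausson R, with second
variation given by the quadratic form Q. -/
def TaylorS (N : ℕ) : Prop :=
  ∀ η > (0 : ℝ), ∃ ρ > (0 : ℝ), ∀ w : Sp N → ℂ, IsSigma w → Integrable (logTerm w) →
    Real.sqrt (h1NormSq (fun x => w x - (gausson N x : ℂ))) < ρ →
    |actionS w - actionS (fun x => (gausson N x : ℂ))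
        - (1 / 2) * quadQ N (fun x => w x - (gausson N x : ℂ))|
      ≤ η * h1NormSq (fun x => w x - (gausson N x : ℂ))

/-! Expanding the square, `‖ψ - e^{-iθ} R(· + y)‖² = ‖ψ‖² + ‖R‖² - 2 Re (e^{iθ} c(y))` with the
correlation `c(y) = ∫ ψ(x) R(x + y) dx`, so a minimiser is a maximiser `y₀` of `|c|` together with
the phase `θ₀ = -arg c(y₀)` reduced mod `2π`. The correlation is continuous, and it vanishes at
infinity: weighted AM–GM bounds `|c(y)|` by `t ∫ (1 + |x|²)|ψ|² + t⁻¹ ∫ R(x + y)² / (1 + |x|²)`,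
and the last integral tends to `0` by dominated convergence. Hence `|c|` attains its maximum. -/

lemma mul_le_half_mul_sq_add_sq_div {s : ℝ} (hs : 0 < s) (a b : ℝ) :
    a * b ≤ s / 2 * a ^ 2 + b ^ 2 / (2 * s) := by
  have key : s / 2 * a ^ 2 + b ^ 2 / (2 * s) - a * b = (s * a - b) ^ 2 / (2 * s) := by
    field_simp; ring
  rw [← sub_nonneg, key]
  positivity

lemma Continuous.exists_forall_norm_le_of_tendsto_cocompact {X E : Type*} [TopologicalSpace X]
    [Nonempty X] [NormedAddCommGroup E] {f : X → E} (hf : Continuous f)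
    (hlim : Tendsto f (cocompact X) (𝓝 0)) : ∃ x₀, ∀ x, ‖f x‖ ≤ ‖f x₀‖ := by
  by_cases hzero : ∀ x, f x = 0
  · exact ⟨Classical.arbitrary X, fun x => by simp [hzero]⟩
  obtain ⟨x₀, hx₀⟩ := not_forall.1 hzero
  exact hf.norm.exists_forall_ge' x₀ ((tendsto_zero_iff_norm_tendsto_zero.1 hlim).eventually
    (ge_mem_nhds (norm_pos_iff.2 hx₀)))

lemma Complex.exists_mem_Ico_re_exp_mul_eq_norm (z : ℂ) :
    ∃ θ ∈ Set.Ico 0 (2 * π), (exp (I * θ) * z).re = ‖z‖ := by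
  set θ := toIcoMod two_pi_pos 0 (-z.arg)
  have hθ : θ = -z.arg + (-toIcoDiv two_pi_pos 0 (-z.arg) : ℤ) * (2 * π) := by
    rw [← sub_eq_iff_eq_add', toIcoMod_sub_self, zsmul_eq_mul]
  have hexp : exp (I * θ) = exp (-(z.arg * I)) := by
    rw [hθ, Complex.exp_eq_exp_iff_exists_int]
    exact ⟨-toIcoDiv two_pi_pos 0 (-z.arg), by push_cast; ring⟩
  refine ⟨θ, toIcoMod_mem_Ico' _ _, ?_⟩
  calc (exp (I * θ) * z).re = (exp (-(z.arg * I)) * (‖z‖ * exp (z.arg * I))).re := by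
        rw [hexp, norm_mul_exp_arg_mul_I]
    _ = ‖z‖ := by
        rw [mul_left_comm, ← Complex.exp_add, neg_add_cancel, Complex.exp_zero, mul_one,
          Complex.ofReal_re]

lemma integrable_exp_neg_mul_sq_norm {V : Type*} [NormedAddCommGroup V] [InnerProductSpace ℝ V]
    [FiniteDimensional ℝ V] [MeasurableSpace V] [BorelSpace V] {b : ℝ} (hb : 0 < b) :
    Integrable fun x : V => Real.exp (-b * ‖x‖ ^ 2) := by
  refine (GaussianFourier.integrable_cexp_neg_mul_sq_norm_add (b := b) (by simpa) 0 0).norm.congr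
    (.of_forall fun x => ?_)
  simp [Complex.norm_exp, ← Complex.ofReal_pow]

@[fun_prop]
lemma continuous_gausson (N : ℕ) : Continuous (gausson N) := by
  unfold gausson; fun_prop

lemma gausson_pos (N : ℕ) (x : Sp N) : 0 < gausson N x := by
  unfold gausson; positivity

lemma gausson_sq (N : ℕ) (x : Sp N) :
    gausson N x ^ 2 = Real.exp (1 + N) * Real.exp (-2 * ‖x‖ ^ 2) := by
  rw [gausson, mul_pow, ← Real.exp_nat_mul, ← Real.exp_nat_mul]
  ring_nf

lemma integrable_gausson_sq (N : ℕ) : Integrable fun x : Sp N => gausson N x ^ 2 := by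
  simp_rw [gausson_sq]
  exact (integrable_exp_neg_mul_sq_norm two_pos).const_mul _

lemma integral_gausson_add_sq (y : Sp N) : ∫ x, gausson N (x + y) ^ 2 = massR N :=
  integral_add_right_eq_self (fun x => gausson N x ^ 2) y

lemma gausson_add_le {y : Sp N} {B : ℝ} (hy : ‖y‖ ≤ B) (x : Sp N) :
    gausson N (x + y) ≤ Real.exp ((1 + N) / 2 + B ^ 2) * Real.exp (-‖x‖ ^ 2 / 2) := by
  rw [gausson, ← Real.exp_add, ← Real.exp_add, Real.exp_le_exp]
  have : ‖x‖ ≤ ‖x + y‖ + B := by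
    simpa using (norm_sub_le (x + y) y).trans (by gcongr)
  nlinarith [norm_nonneg (x + y), norm_nonneg x, sq_nonneg (‖x + y‖ - B)]

lemma tendsto_integral_gausson_add_sq_div_cocompact (N : ℕ) :
    Tendsto (fun y : Sp N => ∫ x, gausson N (x + y) ^ 2 / (1 + ‖x‖ ^ 2))
      (cocompact (Sp N)) (𝓝 0) := by
  have : (cocompact (Sp N)).IsCountablyGenerated := by
    rw [← Metric.cobounded_eq_cocompact, ← comap_norm_atTop]; infer_instance
  have hshift (y : Sp N) : ∫ x, gausson N (x + y) ^ 2 / (1 + ‖x‖ ^ 2)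
      = ∫ u, gausson N u ^ 2 / (1 + ‖u - y‖ ^ 2) := by
    simpa using (integral_add_right_eq_self (μ := volume)
      (fun u => gausson N u ^ 2 / (1 + ‖u - y‖ ^ 2)) y)
  simp_rw [hshift]
  have hlim (u : Sp N) : Tendsto (fun y => 1 + ‖u - y‖ ^ 2) (cocompact (Sp N)) atTop := by
    refine tendsto_atTop_add_const_left _ _ ((tendsto_pow_atTop two_ne_zero).comp ?_)
    refine tendsto_atTop_mono (fun y => ?_)
      (tendsto_atTop_add_const_right _ (-‖u‖) tendsto_norm_cocompact_atTop)
    linarith [norm_sub_norm_le y u, norm_sub_rev u y]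
  simpa using tendsto_integral_filter_of_dominated_convergence
    (F := fun y u => gausson N u ^ 2 / (1 + ‖u - y‖ ^ 2)) (fun u => gausson N u ^ 2)
    (.of_forall fun y => (((continuous_gausson N).pow 2).div (by fun_prop)
      (fun u => by positivity)).aestronglyMeasurable)
    (.of_forall fun y => .of_forall fun u => by
      rw [Real.norm_of_nonneg (by positivity)]
      exact div_le_self (by positivity) (by nlinarith [sq_nonneg ‖u - y‖]))
    (integrable_gausson_sq N)
    (.of_forall fun u => tendsto_const_nhds.div_atTop (hlim u))

lemma norm_sub_exp_neg_mul_sq (a : ℂ) (θ r : ℝ) :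
    ‖a - Complex.exp (-(Complex.I * θ)) * r‖ ^ 2
      = ‖a‖ ^ 2 + r ^ 2 - 2 * (Complex.exp (Complex.I * θ) * (a * r)).re := by
  have hconj : starRingEnd ℂ (Complex.exp (Complex.I * θ)) = Complex.exp (-(Complex.I * θ)) := by
    rw [← Complex.exp_conj]; simp
  have hnorm : ‖Complex.exp (-(Complex.I * θ))‖ = 1 := by
    rw [Complex.norm_exp]; simp
  rw [norm_sub_sq_real, Complex.inner, norm_mul, hnorm, Complex.norm_real, Real.norm_eq_abs,
    one_mul, sq_abs, ← Complex.conj_re, ← hconj]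
  simp only [map_mul, Complex.conj_conj, Complex.conj_ofReal]
  ring_nf

def gaussonCorrelation (ψ : Sp N → ℂ) (y : Sp N) : ℂ :=
  ∫ x, ψ x * gausson N (x + y)

lemma norm_mul_gausson (z : ℂ) (x : Sp N) : ‖z * gausson N x‖ = ‖z‖ * gausson N x := by
  rw [norm_mul, Complex.norm_real, Real.norm_of_nonneg (gausson_pos N x).le]

section Correlation

variable {ψ : Sp N → ℂ}

lemma integrable_mul_gausson_add (hψ : MemLp ψ 2) (y : Sp N) :
    Integrable fun x => ψ x * gausson N (x + y) := by
  have hR : MemLp (fun x => (gausson N (x + y) : ℂ)) 2 := by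
    refine (memLp_two_iff_integrable_sq_norm (by fun_prop)).2 ?_
    simpa using (integrable_gausson_sq N).comp_add_right y
  exact hψ.integrable_mul hR

lemma integral_norm_sub_gausson_sq (hψ : MemLp ψ 2) (y : Sp N) (θ : ℝ) :
    ∫ x, ‖ψ x - Complex.exp (-(Complex.I * θ)) * gausson N (x + y)‖ ^ 2
      = (∫ x, ‖ψ x‖ ^ 2) + massR N
        - 2 * (Complex.exp (Complex.I * θ) * gaussonCorrelation ψ y).re := by
  have hψ2 := (memLp_two_iff_integrable_sq_norm hψ.1).1 hψ
  have hprod := (integrable_mul_gausson_add hψ y).const_mul (Complex.exp (Complex.I * θ))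
  simp_rw [norm_sub_exp_neg_mul_sq]
  rw [integral_sub, integral_add, integral_gausson_add_sq,
    integral_const_mul, gaussonCorrelation, ← integral_const_mul (Complex.exp (Complex.I * θ)),
    ← RCLike.re_to_complex, ← integral_re hprod]
  · rfl
  · exact hψ2
  · exact (integrable_gausson_sq N).comp_add_right y
  · exact hψ2.add ((integrable_gausson_sq N).comp_add_right y)
  · exact (Complex.reCLM.integrable_comp hprod).const_mul 2

lemma continuous_gaussonCorrelation (hψ : MemLp ψ 2) : Continuous (gaussonCorrelation ψ) := by
  have hψ2 := (memLp_two_iff_integrable_sq_norm hψ.1).1 hψ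
  refine continuous_iff_continuousAt.2 fun y₀ => ?_
  set C := Real.exp ((1 + N) / 2 + (‖y₀‖ + 1) ^ 2)
  have hnear : ∀ᶠ y in 𝓝 y₀, ‖y‖ ≤ ‖y₀‖ + 1 := by
    filter_upwards [Metric.closedBall_mem_nhds y₀ one_pos] with y hy
    linarith [norm_le_norm_add_norm_sub' y y₀, dist_eq_norm y y₀ ▸ Metric.mem_closedBall.1 hy]
  refine continuousAt_of_dominated
    (bound := fun x => ‖ψ x‖ ^ 2 / 2 + C ^ 2 * Real.exp (-1 * ‖x‖ ^ 2) / 2)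
    (.of_forall fun y => (integrable_mul_gausson_add hψ y).1) ?_
    ((hψ2.div_const 2).add (((integrable_exp_neg_mul_sq_norm one_pos).const_mul _).div_const 2))
    (.of_forall fun x => by fun_prop)
  filter_upwards [hnear] with y hy
  refine .of_forall fun x => ?_
  have hsq : (C * Real.exp (-‖x‖ ^ 2 / 2)) ^ 2 = C ^ 2 * Real.exp (-1 * ‖x‖ ^ 2) := by
    rw [mul_pow, ← Real.exp_nat_mul (-‖x‖ ^ 2 / 2)]; ring_nf
  rw [norm_mul_gausson]
  nlinarith [two_mul_le_add_sq ‖ψ x‖ (C * Real.exp (-‖x‖ ^ 2 / 2)), gausson_add_le hy x,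
    norm_nonneg (ψ x)]

lemma norm_gaussonCorrelation_le (hψ : MemLp ψ 2) (hw : Integrable fun x => ‖x‖ ^ 2 * ‖ψ x‖ ^ 2)
    {t : ℝ} (ht : 0 < t) (y : Sp N) :
    ‖gaussonCorrelation ψ y‖ ≤ t / 2 * (∫ x, (1 + ‖x‖ ^ 2) * ‖ψ x‖ ^ 2)
      + (∫ x, gausson N (x + y) ^ 2 / (1 + ‖x‖ ^ 2)) / (2 * t) := by
  have hψ2 := (memLp_two_iff_integrable_sq_norm hψ.1).1 hψ
  have hweight : Integrable fun x => (1 + ‖x‖ ^ 2) * ‖ψ x‖ ^ 2 :=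
    (hψ2.add hw).congr (.of_forall fun x => by simp only [Pi.add_apply]; ring)
  have hdecay : Integrable fun x => gausson N (x + y) ^ 2 / (1 + ‖x‖ ^ 2) := by
    refine ((integrable_gausson_sq N).comp_add_right y).mono'
      (Continuous.aestronglyMeasurable (by fun_prop (disch := exact fun x => by positivity)))
      (.of_forall fun x => ?_)
    rw [Real.norm_of_nonneg (by positivity)]
    exact div_le_self (by positivity) (by nlinarith [sq_nonneg ‖x‖])
  calc ‖gaussonCorrelation ψ y‖ ≤ ∫ x, ‖ψ x * gausson N (x + y)‖ := norm_integral_le_integral_norm _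
    _ ≤ ∫ x, (t / 2 * ((1 + ‖x‖ ^ 2) * ‖ψ x‖ ^ 2)
          + gausson N (x + y) ^ 2 / (1 + ‖x‖ ^ 2) / (2 * t)) := by
        refine integral_mono (integrable_mul_gausson_add hψ y).norm
          ((hweight.const_mul _).add (hdecay.div_const _)) fun x => ?_
        have hpos : 0 < t * (1 + ‖x‖ ^ 2) := by positivity
        rw [norm_mul_gausson]
        refine (mul_le_half_mul_sq_add_sq_div hpos ‖ψ x‖ (gausson N (x + y))).trans_eq ?_
        field_simp
    _ = _ := by
        rw [integral_add (hweight.const_mul _) (hdecay.div_const _), integral_const_mul,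
          integral_div]

lemma tendsto_gaussonCorrelation_cocompact (hψ : MemLp ψ 2)
    (hw : Integrable fun x => ‖x‖ ^ 2 * ‖ψ x‖ ^ 2) :
    Tendsto (gaussonCorrelation ψ) (cocompact (Sp N)) (𝓝 0) := by
  set A := ∫ x, (1 + ‖x‖ ^ 2) * ‖ψ x‖ ^ 2 with hA_def
  have hA : 0 ≤ A := integral_nonneg fun x => by positivity
  refine tendsto_zero_iff_norm_tendsto_zero.2 (Metric.tendsto_nhds.2 fun ε hε => ?_)
  set t := ε / (A + 1)
  have ht : 0 < t := by positivity
  filter_upwards [(tendsto_integral_gausson_add_sq_div_cocompact N).eventually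
    (gt_mem_nhds (mul_pos ht hε))] with y hy
  have hbound := norm_gaussonCorrelation_le hψ hw ht y
  rw [← hA_def] at hbound
  have htA : t * A < ε := by
    rw [div_mul_eq_mul_div, div_lt_iff₀ (by positivity)]; nlinarith
  have hdecay : (∫ x, gausson N (x + y) ^ 2 / (1 + ‖x‖ ^ 2)) / (2 * t) < ε / 2 := by
    rw [div_lt_iff₀ (by positivity)]; linarith
  rw [Real.dist_eq, sub_zero, abs_norm]
  linarith

end Correlation

theorem stmt14_general (N : ℕ) (ψ : Sp N → ℂ) (hψ : IsSigma ψ) :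
    ∃ (y₀ : Sp N) (θ₀ : ℝ), θ₀ ∈ Set.Ico 0 (2 * π) ∧
      Real.sqrt (∫ x,
          ‖ψ x - Complex.exp (-(Complex.I * (θ₀ : ℂ))) * (gausson N (x + y₀) : ℝ)‖ ^ 2)
        = sInf {d : ℝ | ∃ (y : Sp N) (θ : ℝ), θ ∈ Set.Ico 0 (2 * π) ∧
            d = Real.sqrt (∫ x,
              ‖ψ x - Complex.exp (-(Complex.I * (θ : ℂ))) * (gausson N (x + y) : ℝ)‖ ^ 2)} := by
  obtain ⟨hsmooth, hsq, -, hweight⟩ := hψ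
  have hL2 : MemLp ψ 2 :=
    (memLp_two_iff_integrable_sq_norm hsmooth.continuous.aestronglyMeasurable).2 hsq
  obtain ⟨y₀, hy₀⟩ := (continuous_gaussonCorrelation hL2).exists_forall_norm_le_of_tendsto_cocompact
    (tendsto_gaussonCorrelation_cocompact hL2 hweight)
  obtain ⟨θ₀, hθ₀, hphase⟩ := Complex.exists_mem_Ico_re_exp_mul_eq_norm (gaussonCorrelation ψ y₀)
  refine ⟨y₀, θ₀, hθ₀, Eq.symm (IsLeast.csInf_eq ⟨⟨y₀, θ₀, hθ₀, rfl⟩, ?_⟩)⟩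
  rintro _ ⟨y, θ, -, rfl⟩
  apply Real.sqrt_le_sqrt
  rw [integral_norm_sub_gausson_sq hL2, integral_norm_sub_gausson_sq hL2, hphase]
  have hre := Complex.re_le_norm (Complex.exp (Complex.I * θ) * gaussonCorrelation ψ y)
  rw [norm_mul, Complex.norm_exp_I_mul_ofReal, one_mul] at hre
  linarith [hy₀ y]

/-- the modulation infimum is attained. -/
theorem stmt14 (N : ℕ) (hN : 1 ≤ N) (ψ : Sp N → ℂ) (hψ : IsSigma ψ)
    (hm : (∫ x, ‖ψ x‖ ^ 2) = massR N)
    (hinf : sInf {d : ℝ | ∃ (y : Sp N) (θ : ℝ), θ ∈ Set.Ico 0 (2 * π) ∧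
        d = Real.sqrt (∫ x,
          ‖ψ x - Complex.exp (-(Complex.I * (θ : ℂ))) * (gausson N (x + y) : ℝ)‖ ^ 2)}
      ≤ Real.sqrt (massR N)) :
    ∃ (y₀ : Sp N) (θ₀ : ℝ), θ₀ ∈ Set.Ico 0 (2 * π) ∧
      Real.sqrt (∫ x,
          ‖ψ x - Complex.exp (-(Complex.I * (θ₀ : ℂ))) * (gausson N (x + y₀) : ℝ)‖ ^ 2)
        = sInf {d : ℝ | ∃ (y : Sp N) (θ : ℝ), θ ∈ Set.Ico 0 (2 * π) ∧
            d = Real.sqrt (∫ x,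
              ‖ψ x - Complex.exp (-(Complex.I * (θ : ℂ))) * (gausson N (x + y) : ℝ)‖ ^ 2)} :=
  stmt14_general N ψ hψ
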